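/- For a continuous ℂ^{n×n}-valued potential Q on [−1,1], λ ∈ ρ(L^D) if and only if the 2n×2n matrix X = [γ_D Y_−, γ_D V_−] is invertible, in which case the Dirichlet-to-Neumann map is given by M(λ) = Z X^{−1}, where Z = [γ_N Y_−, γ_N V_−]. -/

import Mathlib

/-!
A solution of `-u'' + Qu = λu` is determined by its Cauchy data `c = (u'(-1), u(-1))`, since the
equivalent first-order system is linear with continuous coefficients (Grönwall). Hence
`u = Y₋ u'(-1) + V₋ u(-1)`, so `γ_D u = X c` and `γ_N u = Z c`. Solutions with `γ_D u = 0` thus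
correspond to the kernel of `X`, and the Dirichlet-to-Neumann property gives `M X c = Z c` for
every `c`.
-/

open Matrix

noncomputable section
namespace Evans

variable {n : ℕ}

/-- `u` (with derivative `u'`) solves `-u'' + Qu = z u` on `ℝ`. -/
def SolvesODE (Q : ℝ → Matrix (Fin n) (Fin n) ℂ) (z : ℂ)
    (u u' : ℝ → Fin n → ℂ) : Prop :=
  (∀ x : ℝ, HasDerivAt u (u' x) x) ∧
  (∀ x : ℝ, HasDerivAt u' (Q x *ᵥ u x - z • u x) x)

/-- `Y` (with derivative `Y'`) is a matrix solution of `-Y'' + QY = zY`: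
each column solves the equation. -/
def SolvesMatODE (Q : ℝ → Matrix (Fin n) (Fin n) ℂ) (z : ℂ)
    (Y Y' : ℝ → Matrix (Fin n) (Fin n) ℂ) : Prop :=
  ∀ j : Fin n,
    SolvesODE Q z (fun t i => Y t i j) (fun t i => Y' t i j)

/-- Dirichlet trace `γ_D u = (u(1), u(-1)) ∈ ℂ^{2n}`. -/
def trD (u : ℝ → Fin n → ℂ) : (Fin n ⊕ Fin n) → ℂ :=
  Sum.elim (u 1) (u (-1))

/-- Neumann trace `γ_N u = (u'(1), -u'(-1)) ∈ ℂ^{2n}`. -/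
def trN (u' : ℝ → Fin n → ℂ) : (Fin n ⊕ Fin n) → ℂ :=
  Sum.elim (u' 1) (-(u' (-1)))

/-- `z ∈ ρ(𝓛^D)`: no nontrivial solution of `-u''+Qu = zu` with zero
Dirichlet trace. -/
def DirichletResolvent (Q : ℝ → Matrix (Fin n) (Fin n) ℂ) : Set ℂ :=
  {z : ℂ | ∀ u u', SolvesODE Q z u u' → trD u = 0 → u = 0}

/-- `M` is the Dirichlet-to-Neumann matrix of `-d²/dx² + Q` at `z`. -/
def IsDtN (Q : ℝ → Matrix (Fin n) (Fin n) ℂ) (z : ℂ)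
    (M : Matrix (Fin n ⊕ Fin n) (Fin n ⊕ Fin n) ℂ) : Prop :=
  ∀ f : (Fin n ⊕ Fin n) → ℂ, ∃ u u',
    SolvesODE Q z u u' ∧ trD u = f ∧ M *ᵥ f = trN u'

section LinearODE

variable {𝕜 E : Type*} [NontriviallyNormedField 𝕜] [NormedAddCommGroup E] [NormedSpace ℝ E]
  [NormedSpace 𝕜 E]

theorem eq_zero_of_hasDerivAt_clm_apply {A : ℝ → E →L[𝕜] E} (hA : Continuous A) {f : ℝ → E}
    (hf : ∀ t, HasDerivAt f (A t (f t)) t) {t₀ : ℝ} (h₀ : f t₀ = 0) : f = 0 := by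
  funext t
  obtain ⟨a, b, ht, ht₀⟩ : ∃ a b, t ∈ Set.Ioo a b ∧ t₀ ∈ Set.Ioo a b :=
    ⟨min t t₀ - 1, max t t₀ + 1, by constructor <;> constructor <;> grind⟩
  obtain ⟨C, hC⟩ := (isCompact_Icc (a := a) (b := b)).exists_bound_of_continuousOn hA.continuousOn
  have hLip : ∀ s ∈ Set.Ioo a b, LipschitzOnWith C.toNNReal (A s) Set.univ := fun s hs =>
    ((A s).lipschitz.weaken (by
      rw [← NNReal.coe_le_coe, coe_nnnorm, Real.coe_toNNReal']
      exact (hC s (Set.Ioo_subset_Icc_self hs)).trans (le_max_left _ _))).lipschitzOnWith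
  exact ODE_solution_unique_of_mem_Ioo hLip ht₀ (fun s _ => ⟨hf s, trivial⟩)
    (fun s _ => ⟨by simp, trivial⟩) h₀ ht

end LinearODE

def firstOrderSystem (Q : ℝ → Matrix (Fin n) (Fin n) ℂ) (z : ℂ) (t : ℝ) :
    ((Fin n → ℂ) × (Fin n → ℂ)) →L[ℂ] ((Fin n → ℂ) × (Fin n → ℂ)) :=
  LinearMap.toContinuousLinearMap <|
    (LinearMap.snd ℂ _ _).prod ((Matrix.toLin' (Q t) - z • LinearMap.id) ∘ₗ LinearMap.fst ℂ _ _)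

variable {Q : ℝ → Matrix (Fin n) (Fin n) ℂ} {z : ℂ}

@[simp]
theorem firstOrderSystem_apply (t : ℝ) (p : (Fin n → ℂ) × (Fin n → ℂ)) :
    firstOrderSystem Q z t p = (p.2, Q t *ᵥ p.1 - z • p.1) := by
  simp [firstOrderSystem]

theorem continuous_firstOrderSystem (hQ : Continuous Q) : Continuous (firstOrderSystem Q z) :=
  continuous_clm_apply.2 fun p => by
    simp only [firstOrderSystem_apply]
    fun_prop

namespace SolvesODE

variable {u u' w w' : ℝ → Fin n → ℂ}

theorem add (hu : SolvesODE Q z u u') (hw : SolvesODE Q z w w') :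
    SolvesODE Q z (u + w) (u' + w') := by
  refine ⟨fun x => (hu.1 x).add (hw.1 x), fun x => ((hu.2 x).add (hw.2 x)).congr_deriv ?_⟩
  simp only [Pi.add_apply, mulVec_add, smul_add]
  abel

theorem sub (hu : SolvesODE Q z u u') (hw : SolvesODE Q z w w') :
    SolvesODE Q z (u - w) (u' - w') := by
  refine ⟨fun x => (hu.1 x).sub (hw.1 x), fun x => ((hu.2 x).sub (hw.2 x)).congr_deriv ?_⟩
  simp only [Pi.sub_apply, mulVec_sub, smul_sub]
  abel

theorem eq_zero (hQ : Continuous Q) (h : SolvesODE Q z u u') {t₀ : ℝ} (h₀ : u t₀ = 0)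
    (h₁ : u' t₀ = 0) : u = 0 ∧ u' = 0 := by
  have hsys : ∀ t, HasDerivAt (fun t => (u t, u' t))
      (firstOrderSystem Q z t (u t, u' t)) t := fun t => by
    simpa using (h.1 t).prodMk (h.2 t)
  have := eq_zero_of_hasDerivAt_clm_apply (continuous_firstOrderSystem hQ) hsys (t₀ := t₀)
    (by simp [h₀, h₁])
  exact ⟨funext fun t => congrArg Prod.fst (congrFun this t),
    funext fun t => congrArg Prod.snd (congrFun this t)⟩

end SolvesODE

theorem hasDerivAt_mulVec_of_cols {m k : Type*} [Fintype m] [Fintype k] {A : ℝ → Matrix m k ℂ}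
    {A' : Matrix m k ℂ} {x : ℝ} (h : ∀ j, HasDerivAt (fun t i => A t i j) (fun i => A' i j) x)
    (c : k → ℂ) : HasDerivAt (fun t => A t *ᵥ c) (A' *ᵥ c) x := by
  have hcols : ∀ B : Matrix m k ℂ, B *ᵥ c = ∑ j, c j • fun i => B i j := fun B => by
    ext i
    simp [mulVec, dotProduct, mul_comm]
  simp only [hcols]
  exact HasDerivAt.fun_sum fun j _ => (h j).const_smul (c j)

theorem SolvesMatODE.mulVec {Y Y' : ℝ → Matrix (Fin n) (Fin n) ℂ} (hY : SolvesMatODE Q z Y Y')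
    (c : Fin n → ℂ) : SolvesODE Q z (fun t => Y t *ᵥ c) (fun t => Y' t *ᵥ c) := by
  refine ⟨fun x => hasDerivAt_mulVec_of_cols (fun j => (hY j).1 x) c, fun x => ?_⟩
  have hcol : ∀ j, HasDerivAt (fun t i => Y' t i j)
      (fun i => (Q x * Y x - z • Y x) i j) x := fun j => by
    convert (hY j).2 x using 1
    ext i
    simp [Matrix.mul_apply]
    rfl
  convert hasDerivAt_mulVec_of_cols hcol c using 1
  rw [sub_mulVec, mulVec_mulVec, smul_mulVec]

section Frame

variable {Y Y' V V' : ℝ → Matrix (Fin n) (Fin n) ℂ}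

def frameSol (Y V : ℝ → Matrix (Fin n) (Fin n) ℂ) (w : Fin n ⊕ Fin n → ℂ) : ℝ → Fin n → ℂ :=
  fun t => Y t *ᵥ (w ∘ Sum.inl) + V t *ᵥ (w ∘ Sum.inr)

/-- Cauchy data at `-1`, ordered as the columns `[Y₋, V₋]` of the frame. -/
def cauchyData (u u' : ℝ → Fin n → ℂ) : Fin n ⊕ Fin n → ℂ :=
  Sum.elim (u' (-1)) (u (-1))

theorem cauchyData_eq_zero_iff {u u' : ℝ → Fin n → ℂ} :
    cauchyData u u' = 0 ↔ u (-1) = 0 ∧ u' (-1) = 0 := by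
  simp only [cauchyData, funext_iff, Sum.forall, Sum.elim_inl, Sum.elim_inr, Pi.zero_apply,
    and_comm]

theorem cauchyData_sub (u u' w w' : ℝ → Fin n → ℂ) :
    cauchyData (u - w) (u' - w') = cauchyData u u' - cauchyData w w' := by
  ext (_ | _) <;> rfl

theorem solvesODE_frameSol (hY : SolvesMatODE Q z Y Y') (hV : SolvesMatODE Q z V V')
    (w : Fin n ⊕ Fin n → ℂ) : SolvesODE Q z (frameSol Y V w) (frameSol Y' V' w) :=
  (hY.mulVec _).add (hV.mulVec _)

theorem trD_frameSol (w : Fin n ⊕ Fin n → ℂ) :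
    trD (frameSol Y V w) = fromBlocks (Y 1) (V 1) (Y (-1)) (V (-1)) *ᵥ w := by
  rw [fromBlocks_mulVec]
  rfl

theorem trN_frameSol (w : Fin n ⊕ Fin n → ℂ) :
    trN (frameSol Y' V' w) = fromBlocks (Y' 1) (V' 1) (-Y' (-1)) (-V' (-1)) *ᵥ w := by
  rw [fromBlocks_mulVec, neg_mulVec, neg_mulVec, ← neg_add]
  rfl

theorem cauchyData_frameSol (hY₀ : Y (-1) = 0) (hY₁ : Y' (-1) = 1) (hV₀ : V (-1) = 1)
    (hV₁ : V' (-1) = 0) (w : Fin n ⊕ Fin n → ℂ) :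
    cauchyData (frameSol Y V w) (frameSol Y' V' w) = w := by
  simp [cauchyData, frameSol, hY₀, hY₁, hV₀, hV₁]

structure IsFundamentalSystem (Q : ℝ → Matrix (Fin n) (Fin n) ℂ) (z : ℂ)
    (Y Y' V V' : ℝ → Matrix (Fin n) (Fin n) ℂ) : Prop where
  solves_Y : SolvesMatODE Q z Y Y'
  solves_V : SolvesMatODE Q z V V'
  Y_neg_one : Y (-1) = 0
  deriv_Y_neg_one : Y' (-1) = 1
  V_neg_one : V (-1) = 1
  deriv_V_neg_one : V' (-1) = 0

namespace IsFundamentalSystem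

variable (hF : IsFundamentalSystem Q z Y Y' V V') (hQ : Continuous Q)
include hF hQ

theorem eq_frameSol_cauchyData {u u' : ℝ → Fin n → ℂ} (h : SolvesODE Q z u u') :
    u = frameSol Y V (cauchyData u u') ∧ u' = frameSol Y' V' (cauchyData u u') := by
  have hdata : cauchyData (u - frameSol Y V (cauchyData u u'))
      (u' - frameSol Y' V' (cauchyData u u')) = 0 := by
    rw [cauchyData_sub, cauchyData_frameSol hF.Y_neg_one hF.deriv_Y_neg_one hF.V_neg_one
      hF.deriv_V_neg_one, sub_self]
  obtain ⟨h₀, h₁⟩ := cauchyData_eq_zero_iff.1 hdata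
  obtain ⟨hd, hd'⟩ := (h.sub (solvesODE_frameSol hF.solves_Y hF.solves_V _)).eq_zero hQ h₀ h₁
  exact ⟨sub_eq_zero.1 hd, sub_eq_zero.1 hd'⟩

theorem trD_eq {u u' : ℝ → Fin n → ℂ} (h : SolvesODE Q z u u') :
    trD u = fromBlocks (Y 1) (V 1) (Y (-1)) (V (-1)) *ᵥ cauchyData u u' := by
  conv_lhs => rw [(hF.eq_frameSol_cauchyData hQ h).1]
  exact trD_frameSol _

theorem trN_eq {u u' : ℝ → Fin n → ℂ} (h : SolvesODE Q z u u') :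
    trN u' = fromBlocks (Y' 1) (V' 1) (-Y' (-1)) (-V' (-1)) *ᵥ cauchyData u u' := by
  conv_lhs => rw [(hF.eq_frameSol_cauchyData hQ h).2]
  exact trN_frameSol _

theorem mem_dirichletResolvent_iff_isUnit :
    z ∈ DirichletResolvent Q ↔ IsUnit (fromBlocks (Y 1) (V 1) (Y (-1)) (V (-1))) := by
  rw [← mulVec_injective_iff_isUnit, ← coe_mulVecLin, injective_iff_map_eq_zero]
  simp only [mulVecLin_apply]
  constructor
  · intro hres w hw
    have hsol := solvesODE_frameSol hF.solves_Y hF.solves_V w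
    have hu : frameSol Y V w = 0 := hres _ _ hsol (by rw [trD_frameSol, hw])
    have hu' : frameSol Y' V' w = 0 := funext fun t =>
      (hsol.1 t).unique (by rw [hu]; exact hasDerivAt_const t 0)
    rw [← cauchyData_frameSol hF.Y_neg_one hF.deriv_Y_neg_one hF.V_neg_one hF.deriv_V_neg_one w,
      hu, hu']
    exact cauchyData_eq_zero_iff.2 ⟨rfl, rfl⟩
  · intro hX u u' hsol hu
    obtain ⟨h₀, h₁⟩ := cauchyData_eq_zero_iff.1 (hX _ ((hF.trD_eq hQ hsol).symm.trans hu))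
    exact (hsol.eq_zero hQ h₀ h₁).1

theorem mul_frame_eq_of_isDtN {M : Matrix (Fin n ⊕ Fin n) (Fin n ⊕ Fin n) ℂ} (hM : IsDtN Q z M)
    (hX : Function.Injective (fromBlocks (Y 1) (V 1) (Y (-1)) (V (-1))).mulVec) :
    M * fromBlocks (Y 1) (V 1) (Y (-1)) (V (-1)) =
      fromBlocks (Y' 1) (V' 1) (-Y' (-1)) (-V' (-1)) := by
  refine ext_iff_mulVec.2 fun w => ?_
  obtain ⟨u, u', hsol, hD, hN⟩ := hM (fromBlocks (Y 1) (V 1) (Y (-1)) (V (-1)) *ᵥ w)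
  have hw : cauchyData u u' = w := hX <| (hF.trD_eq hQ hsol).symm.trans hD
  rw [← mulVec_mulVec, hN, hF.trN_eq hQ hsol, hw]

end IsFundamentalSystem

end Frame

/-- **Lemma 3.2.** -/
theorem lem_frame_DtN
    (Q : ℝ → Matrix (Fin n) (Fin n) ℂ) (hQ : Continuous Q) (z : ℂ)
    -- Y₋ and V₋ with their initial conditions at x = -1
    (Y Y' V V' : ℝ → Matrix (Fin n) (Fin n) ℂ)
    (hY : SolvesMatODE Q z Y Y') (hV : SolvesMatODE Q z V V')
    (hY₀ : Y (-1) = 0) (hY₁ : Y' (-1) = 1)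
    (hV₀ : V (-1) = 1) (hV₁ : V' (-1) = 0) :
    -- X = [γ_D Y₋, γ_D V₋], Z = [γ_N Y₋, γ_N V₋]
    (z ∈ DirichletResolvent Q ↔
      IsUnit (Matrix.fromBlocks (Y 1) (V 1) (Y (-1)) (V (-1)))) ∧
    (z ∈ DirichletResolvent Q →
      ∀ M : Matrix (Fin n ⊕ Fin n) (Fin n ⊕ Fin n) ℂ, IsDtN Q z M →
        M = Matrix.fromBlocks (Y' 1) (V' 1) (-(Y' (-1))) (-(V' (-1))) *
          (Matrix.fromBlocks (Y 1) (V 1) (Y (-1)) (V (-1)))⁻¹) := by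
  have hF : IsFundamentalSystem Q z Y Y' V V' := ⟨hY, hV, hY₀, hY₁, hV₀, hV₁⟩
  have hres := hF.mem_dirichletResolvent_iff_isUnit hQ
  refine ⟨hres, fun hz M hM => ?_⟩
  have hX := hres.1 hz
  rw [← hF.mul_frame_eq_of_isDtN hQ hM (mulVec_injective_iff_isUnit.2 hX),
    mul_nonsing_inv_cancel_right _ _ ((isUnit_iff_isUnit_det _).1 hX)]

end Evans
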